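/- arXiv:1410.1249 — 2 statements merged into one kernel-verified Lean document; each statement's English description precedes it below -/
import Mathlib

section
/- Let C be the formal power series over ℚ with C = ∑_{n≥0} C_n z^n where C_n is the n-th Catalan number. For every integer s ≥ 1 and every n ≥ 0, the coefficient of z^n in C^s equals (s/(2n+s))·binom(2n+s, n). -/
open PowerSeries Finset

/-- The Catalan generating function `C = ∑ Cₙ zⁿ` over `ℚ`. -/
noncomputable def Cgf : PowerSeries ℚ := PowerSeries.mk fun n => (catalan n : ℚ)

/-!
Multiplying the functional equation `C = 1 + z C²` by `Cˢ` gives `Cˢ⁺¹ = Cˢ + z Cˢ⁺²`, i.e.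
`[zⁿ⁺¹] Cˢ⁺¹ = [zⁿ⁺¹] Cˢ + [zⁿ] Cˢ⁺²`. The numbers `s/(2n+s) · binom(2n+s, n)` satisfy the same
recurrence and the same boundary values (`1` at `n = 0`, `0` at `s = 0, n ≥ 1`), so an induction on
`n`, and inside it on `s`, identifies the two.
-/

section Ballot

variable (K : Type*) [Field K]

noncomputable def ballot (s n : ℕ) : K :=
  (s : K) / (2 * n + s) * ((2 * n + s).choose n : K)

theorem ballot_zero_left (n : ℕ) : ballot K 0 n = 0 := by
  simp [ballot]

variable {K} [CharZero K]

theorem ballot_zero_right {s : ℕ} (hs : 1 ≤ s) : ballot K s 0 = 1 := by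
  have : (s : K) ≠ 0 := by exact_mod_cast (by omega : s ≠ 0)
  simp [ballot, this]

theorem ballot_succ_succ (s n : ℕ) :
    ballot K (s + 1) (n + 1) = ballot K s (n + 1) + ballot K (s + 2) n := by
  -- Pascal's rule and `binom(M, n+1) (n+1) = binom(M, n) (M - n)` for `M = 2n + s + 2` reduce
  -- everything to a rational identity in `binom(M, n)`.
  have hPascal := Nat.choose_succ_succ (2 * n + s + 2) n
  have hshift := Nat.choose_succ_right_eq (2 * n + s + 2) n
  rw [show 2 * n + s + 2 - n = n + s + 2 by omega] at hshift
  unfold ballot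
  rw [show 2 * (n + 1) + (s + 1) = 2 * n + s + 2 + 1 by omega,
    show 2 * (n + 1) + s = 2 * n + s + 2 by omega, show 2 * n + (s + 2) = 2 * n + s + 2 by omega,
    hPascal]
  generalize (2 * n + s + 2).choose n = c, (2 * n + s + 2).choose (n + 1) = d at *
  have hn : (n + 1 : K) ≠ 0 := by exact_mod_cast n.succ_ne_zero
  have h1 : (2 * (n + 1) + (s + 1) : K) ≠ 0 := by norm_cast
  have h2 : (2 * (n + 1) + s : K) ≠ 0 := by norm_cast; omega
  have h3 : (2 * n + (s + 2) : K) ≠ 0 := by norm_cast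
  have hd : (d : K) = c * (n + s + 2) / (n + 1) := by
    rw [eq_div_iff hn]
    exact_mod_cast hshift
  push_cast
  rw [hd]
  field_simp
  ring

end Ballot

theorem pow_succ_eq_of_eq_one_add_X_mul_sq {R : Type*} [CommRing R] {F : PowerSeries R}
    (hF : F = 1 + X * F ^ 2) (s : ℕ) : F ^ (s + 1) = F ^ s + X * F ^ (s + 2) := by
  rw [pow_succ]
  nth_rw 2 [hF]
  ring

theorem constantCoeff_eq_one_of_eq_one_add_X_mul_sq {R : Type*} [CommRing R]
    {F : PowerSeries R} (hF : F = 1 + X * F ^ 2) : constantCoeff F = 1 := by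
  rw [hF]
  simp

theorem coeff_pow_eq_ballot_of_eq_one_add_X_mul_sq {K : Type*} [Field K] [CharZero K]
    {F : PowerSeries K} (hF : F = 1 + X * F ^ 2) {s : ℕ} (hs : 1 ≤ s) (n : ℕ) :
    coeff n (F ^ s) = ballot K s n := by
  induction n generalizing s with
  | zero =>
    rw [coeff_zero_eq_constantCoeff_apply, map_pow,
      constantCoeff_eq_one_of_eq_one_add_X_mul_sq hF, one_pow, ballot_zero_right hs]
  | succ n ih =>
    clear hs
    induction s with
    | zero => simp [ballot_zero_left]
    | succ s ihs =>
      rw [pow_succ_eq_of_eq_one_add_X_mul_sq hF, map_add, coeff_succ_X_mul, ihs,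
        ih (by omega), ballot_succ_succ]

theorem Cgf_eq_one_add_X_mul_sq : Cgf = 1 + X * Cgf ^ 2 := by
  ext n
  cases n with
  | zero => simp [Cgf]
  | succ n =>
    rw [map_add, coeff_succ_X_mul, sq, coeff_mul]
    simp only [Cgf, coeff_mk, coeff_one, Nat.succ_ne_zero, if_false, zero_add, catalan_succ']
    push_cast
    rfl

/-- `[zⁿ] Cˢ = (s/(2n+s))·binom(2n+s, n)` for `s ≥ 1`. -/
theorem stmt3 (s : ℕ) (hs : 1 ≤ s) (n : ℕ) :
    PowerSeries.coeff (R := ℚ) n (Cgf ^ s) =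
      (s : ℚ) / (2 * n + s) * ((2 * n + s).choose n : ℚ) :=
  coeff_pow_eq_ballot_of_eq_one_add_X_mul_sq Cgf_eq_one_add_X_mul_sq hs n
end

section
/- Let B and C be the central binomial and Catalan generating functions over ℚ. For every n ≥ 1, the coefficient of z^n in (B−1)/2 + zB³ equals (n+1)·binom(2n−1, n) = ((n+1)/2)·binom(2n,n); that is, the total number of vertices over all right branch new type trees with n edges is (n+1)·binom(2n−1,n). -/
open PowerSeries Finset

/-- The central binomial generating function `B = ∑ binom(2n,n) zⁿ` over `ℚ`. -/
noncomputable def Bgf : PowerSeries ℚ := PowerSeries.mk fun n => ((2 * n).choose n : ℚ)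

/-
`B = (1 - 4z)^{-1/2}`: the recurrence `(n+1)·binom(2n+2,n+1) = 2(2n+1)·binom(2n,n)` says
`(1 - 4z)B' = 2B`, so `(1 - 4z)B²` has derivative zero and equals `1`, whence `B' = 2B³`.
Thus `[zⁿ]zB³ = n·binom(2n,n)/2`, and adding `[zⁿ](B - 1)/2 = binom(2n,n)/2` gives
`(n+1)/2·binom(2n,n)`; finally `binom(2n,n) = 2·binom(2n-1,n)` by Pascal's rule and symmetry.
-/

lemma Nat.two_mul_choose_two_mul_sub_one {n : ℕ} (hn : 1 ≤ n) :
    2 * (2 * n - 1).choose n = (2 * n).choose n := by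
  obtain ⟨m, rfl⟩ := Nat.exists_eq_add_of_le' hn
  rw [show 2 * (m + 1) - 1 = 2 * m + 1 by omega, show 2 * (m + 1) = 2 * m + 1 + 1 by ring,
    Nat.choose_succ_succ' (2 * m + 1) m, Nat.choose_symm_half]
  ring

lemma coeff_Bgf (n : ℕ) : coeff n Bgf = (n.centralBinom : ℚ) := by
  simp [Bgf, Nat.centralBinom]

lemma constantCoeff_Bgf : constantCoeff Bgf = 1 := by
  rw [← coeff_zero_eq_constantCoeff_apply, coeff_Bgf, Nat.centralBinom_zero, Nat.cast_one]

lemma one_sub_four_X_mul_derivative_Bgf :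
    (1 - 4 * X) * d⁄dX ℚ Bgf = 2 * Bgf := by
  ext n
  rw [← map_ofNat C 4, ← map_ofNat C 2, coeff_C_mul, coeff_Bgf, sub_mul, one_mul, map_sub,
    coeff_derivative, coeff_Bgf, mul_assoc, coeff_C_mul]
  rcases n with _ | m
  · norm_num [Nat.centralBinom]
  · have hrec := congrArg (Nat.cast : ℕ → ℚ) (Nat.succ_mul_centralBinom_succ (m + 1))
    rw [coeff_succ_X_mul, coeff_derivative, coeff_Bgf]
    push_cast at hrec ⊢
    linear_combination hrec

lemma one_sub_four_X_mul_Bgf_sq : (1 - 4 * X) * Bgf ^ 2 = 1 := by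
  refine derivative.ext ?_ (by simp [constantCoeff_Bgf])
  rw [← map_ofNat C 4]
  simp only [Derivation.leibniz, derivative_pow, map_sub, derivative_X, derivative_one,
    derivative_C, smul_eq_mul]
  rw [map_ofNat C 4]
  linear_combination 2 * Bgf * one_sub_four_X_mul_derivative_Bgf

lemma derivative_Bgf : d⁄dX ℚ Bgf = 2 * Bgf ^ 3 := by
  linear_combination (-d⁄dX ℚ Bgf) * one_sub_four_X_mul_Bgf_sq +
    Bgf ^ 2 * one_sub_four_X_mul_derivative_Bgf

lemma coeff_Bgf_pow_three (n : ℕ) :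
    coeff n (Bgf ^ 3) = ((n : ℚ) + 1) * (n + 1).centralBinom / 2 := by
  have h := congrArg (coeff n) derivative_Bgf
  rw [coeff_derivative, coeff_Bgf, ← map_ofNat C 2, coeff_C_mul] at h
  linear_combination -h / 2

lemma coeff_inv_two_mul_Bgf_sub_one_add_X_mul_Bgf_pow_three {n : ℕ} (hn : 1 ≤ n) :
    coeff n ((2 : ℚ⟦X⟧)⁻¹ * (Bgf - 1) + X * Bgf ^ 3) =
      ((n : ℚ) + 1) / 2 * n.centralBinom := by
  obtain ⟨m, rfl⟩ := Nat.exists_eq_add_of_le' hn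
  rw [← map_ofNat C 2, C_inv, map_add, coeff_C_mul, map_sub, coeff_Bgf, coeff_one,
    if_neg m.succ_ne_zero, coeff_succ_X_mul, coeff_Bgf_pow_three]
  push_cast
  ring

/-- For `n ≥ 1`, the total number of vertices over all right branch new type trees with
`n` edges is `[zⁿ]((B−1)/2 + zB³) = (n+1)·binom(2n−1,n) = ((n+1)/2)·binom(2n,n)`. -/
theorem stmt14 (n : ℕ) (hn : 1 ≤ n) :
    PowerSeries.coeff n
        ((2 : PowerSeries ℚ)⁻¹ * (Bgf - 1) + PowerSeries.X * Bgf ^ 3) =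
      ((n + 1 : ℕ) : ℚ) * ((2 * n - 1).choose n : ℚ) ∧
    ((n + 1 : ℕ) : ℚ) * ((2 * n - 1).choose n : ℚ) =
      ((n : ℚ) + 1) / 2 * ((2 * n).choose n : ℚ) := by
  have hchoose := congrArg (Nat.cast : ℕ → ℚ) (Nat.two_mul_choose_two_mul_sub_one hn)
  push_cast at hchoose
  have hsecond : ((n + 1 : ℕ) : ℚ) * ((2 * n - 1).choose n : ℚ) =
      ((n : ℚ) + 1) / 2 * ((2 * n).choose n : ℚ) := by
    rw [← hchoose]
    push_cast
    ring
  refine ⟨?_, hsecond⟩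
  rw [hsecond, coeff_inv_two_mul_Bgf_sub_one_add_X_mul_Bgf_pow_three hn,
    Nat.centralBinom_eq_two_mul_choose]
end
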